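/- arXiv:2510.13661 — 3 statements merged into one kernel-verified Lean document; each statement's English description precedes it below -/
import Mathlib

section
/- Let 𝒳 be a nonempty finite type, P : 𝒳 → ℝ a PMF with P x > 0 for every x, and J : 𝒳 → ℝ with ∑ x, J x = 0. Then the function ε ↦ D(P + ε·J ‖ P) − D(P ‖ P + ε·J) is O(|ε|³) as ε → 0; consequently the reversed divergence D(P ‖ P + ε·J) shares the same second-order approximation (ε²/2) · ∑ x, (J x)²/P x up to an O(|ε|³) error, i.e., the KL divergence is locally symmetric to second order. -/
open Finset Filter Topology Asymptotics

/-!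
With `u = ε J x / P x` and `log (1 + u) = u - u² / 2 + O(u³)`, the `x`-th summands of
`D(P + εJ ‖ P)` and of `D(P ‖ P + εJ)` are `± ε J x + ε² (J x)² / (2 P x) + O(ε³)`.
The linear terms cancel in the sum because `∑ x, J x = 0`, so both divergences equal
`(ε² / 2) ∑ x, (J x)² / P x + O(ε³)`.
-/

namespace Real

/-- For real `u`, `Real.log (1 + u)` is the real part of `Complex.log (1 + u)`, so the estimate
follows from the complex one. -/
theorem log_one_add_sub_taylor_isBigO :
    (fun u : ℝ => log (1 + u) - (u - u ^ 2 / 2)) =O[𝓝 0] fun u => u ^ 3 := by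
  have hC := (Complex.log_sub_logTaylor_isBigO 2).comp_tendsto
    (Complex.continuous_ofReal.tendsto' 0 0 Complex.ofReal_zero)
  refine IsBigO.trans ?_ (hC.trans (isBigO_of_le _ fun u => ?_))
  · refine isBigO_of_le _ fun u => le_of_eq_of_le ?_ (Complex.abs_re_le_norm _)
    have hT : Complex.logTaylor 3 u = ((u - u ^ 2 / 2 : ℝ) : ℂ) := by
      simp [Complex.logTaylor_succ, Complex.logTaylor_zero]; ring
    simp only [Function.comp_apply, norm_eq_abs, Complex.sub_re, hT, Complex.ofReal_re,
      Complex.log_re, ← Complex.ofReal_one, ← Complex.ofReal_add, Complex.norm_real, log_abs]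
  · simp

theorem log_one_add_mul_sub_taylor_isBigO (a : ℝ) :
    (fun ε : ℝ => log (1 + ε * a) - (ε * a - (ε * a) ^ 2 / 2)) =O[𝓝 0] fun ε => ε ^ 3 := by
  have hlin : Tendsto (fun ε : ℝ => ε * a) (𝓝 0) (𝓝 0) := by
    simpa using (continuous_mul_const a).tendsto 0
  refine (log_one_add_sub_taylor_isBigO.comp_tendsto hlin).trans ?_
  simpa only [Function.comp_def, mul_pow, mul_comm] using
    (isBigO_refl (fun ε : ℝ => ε ^ 3) _).const_mul_left (a ^ 3)

variable {c : ℝ}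

theorem mul_log_div_add_mul_sub_isBigO (hc : c ≠ 0) (j : ℝ) :
    (fun ε : ℝ => c * log (c / (c + ε * j)) + ε * j - ε ^ 2 / 2 * (j ^ 2 / c))
      =O[𝓝 0] fun ε => ε ^ 3 := by
  refine ((log_one_add_mul_sub_taylor_isBigO (j / c)).const_mul_left (-c)).congr_left
    fun ε => ?_
  rw [show c / (c + ε * j) = (1 + ε * (j / c))⁻¹ by field_simp, log_inv]
  field_simp
  ring

theorem add_mul_mul_log_add_mul_div_sub_isBigO (hc : c ≠ 0) (j : ℝ) :
    (fun ε : ℝ => (c + ε * j) * log ((c + ε * j) / c) - ε * j - ε ^ 2 / 2 * (j ^ 2 / c))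
      =O[𝓝 0] fun ε => ε ^ 3 := by
  have hbdd : (fun ε : ℝ => 1 + ε * (j / c)) =O[𝓝 0] fun _ => (1 : ℝ) :=
    Tendsto.isBigO_one ℝ ((continuous_const.add (continuous_mul_const _)).tendsto 0)
  have hmain := (hbdd.mul (log_one_add_mul_sub_taylor_isBigO (j / c))).const_mul_left c
  simp only [one_mul] at hmain
  refine (hmain.sub ((isBigO_refl _ _).const_mul_left (c * (j / c) ^ 3 / 2))).congr_left
    fun ε => ?_
  rw [show (c + ε * j) / c = 1 + ε * (j / c) by field_simp]
  field_simp
  ring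

end Real

theorem kl_local_symmetry_general {𝒳 : Type*} [Fintype 𝒳]
    (P J : 𝒳 → ℝ)
    (hP0 : ∀ x, 0 < P x)
    (hJ : ∑ x, J x = 0) :
    ((fun ε : ℝ =>
        (∑ x, if P x + ε * J x = 0 then 0
          else (P x + ε * J x) * Real.log ((P x + ε * J x) / P x))
        - ∑ x, P x * Real.log (P x / (P x + ε * J x)))
      =O[𝓝 0] (fun ε : ℝ => |ε| ^ 3)) ∧
    ((fun ε : ℝ =>
        (∑ x, P x * Real.log (P x / (P x + ε * J x)))
        - ε ^ 2 / 2 * ∑ x, (J x) ^ 2 / P x)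
      =O[𝓝 0] (fun ε : ℝ => |ε| ^ 3)) := by
  have hlin (ε : ℝ) : ∑ x, ε * J x = 0 := by rw [← mul_sum, hJ, mul_zero]
  have hfwd : (fun ε : ℝ => (∑ x, if P x + ε * J x = 0 then 0
        else (P x + ε * J x) * Real.log ((P x + ε * J x) / P x))
        - ε ^ 2 / 2 * ∑ x, J x ^ 2 / P x) =O[𝓝 0] fun ε => ε ^ 3 := by
    refine (IsBigO.fun_sum (s := univ) fun x _ =>
      Real.add_mul_mul_log_add_mul_div_sub_isBigO (hP0 x).ne' (J x)).congr_left fun ε => ?_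
    have hzero_mul_log (x : 𝒳) : (if P x + ε * J x = 0 then 0
        else (P x + ε * J x) * Real.log ((P x + ε * J x) / P x))
          = (P x + ε * J x) * Real.log ((P x + ε * J x) / P x) :=
      ite_eq_right_iff.2 fun h => by rw [h, zero_mul]
    simp only [hzero_mul_log, sum_sub_distrib, hlin, mul_sum, sub_zero]
  have hrev : (fun ε : ℝ => (∑ x, P x * Real.log (P x / (P x + ε * J x)))
        - ε ^ 2 / 2 * ∑ x, J x ^ 2 / P x) =O[𝓝 0] fun ε => ε ^ 3 := by
    refine (IsBigO.fun_sum (s := univ) fun x _ =>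
      Real.mul_log_div_add_mul_sub_isBigO (hP0 x).ne' (J x)).congr_left fun ε => ?_
    simp only [sum_sub_distrib, sum_add_distrib, hlin, mul_sum, add_zero]
  have hcube {f : ℝ → ℝ} (hf : f =O[𝓝 0] fun ε => ε ^ 3) : f =O[𝓝 0] fun ε => |ε| ^ 3 := by
    simpa only [abs_pow] using hf.abs_right
  exact ⟨hcube ((hfwd.sub hrev).congr_left fun ε => by ring), hcube hrev⟩

/-- For a strictly positive PMF `P` and a zero-sum perturbation `J`,
the difference between the forward KL divergence `D(P + ε·J ‖ P)` and the reversed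
divergence `D(P ‖ P + ε·J)` is `O(|ε|³)` as `ε → 0`; consequently the reversed
divergence shares the same second-order approximation `(ε²/2) ∑ x (J x)²/(P x)`
up to an `O(|ε|³)` error, i.e. KL divergence is locally symmetric to second order. -/
theorem kl_local_symmetry {𝒳 : Type*} [Fintype 𝒳] [Nonempty 𝒳]
    (P J : 𝒳 → ℝ)
    (hP0 : ∀ x, 0 < P x) (hP1 : ∑ x, P x = 1)
    (hJ : ∑ x, J x = 0) :
    ((fun ε : ℝ =>
        (∑ x, if P x + ε * J x = 0 then 0
          else (P x + ε * J x) * Real.log ((P x + ε * J x) / P x))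
        - ∑ x, P x * Real.log (P x / (P x + ε * J x)))
      =O[𝓝 0] (fun ε : ℝ => |ε| ^ 3)) ∧
    ((fun ε : ℝ =>
        (∑ x, P x * Real.log (P x / (P x + ε * J x)))
        - ε ^ 2 / 2 * ∑ x, (J x) ^ 2 / P x)
      =O[𝓝 0] (fun ε : ℝ => |ε| ^ 3)) :=
  kl_local_symmetry_general P J hP0 hJ
end

section
/- Let 𝒰, 𝒳, 𝒴 be nonempty finite types, P_U a PMF on 𝒰, P_X a PMF on 𝒳 with P_X x > 0 for every x, and W(y|x) a channel (for each x, W(·|x) is a PMF on 𝒴). Assume the output marginal P_Y y = ∑ x, P_X x * W(y|x) satisfies P_Y y > 0 for every y. Let J(·|u) : 𝒳 → ℝ satisfy ∑ x, J(x|u) = 0 for every u and ∑ u, P_U u * J(x|u) = 0 for every x, and define the induced output perturbation J_Y(y|u) = ∑ x, J(x|u) * W(y|x). For ε near 0 define the joint PMF q_ε(u,y) = P_U u * ∑ x, (P_X x + ε·J(x|u)) * W(y|x). Then the function ε ↦ I_ε(U;Y) − (ε²/2) · ∑ u, P_U u * ∑ y, (J_Y(y|u))² / P_Y y is O(|ε|³)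 as ε → 0, where I_ε(U;Y) denotes the mutual information of the joint PMF q_ε. -/
open Finset Filter Topology Asymptotics

/-!
The perturbed joint law `q_ε(u, y) = P_U u * (P_Y y + ε J_Y(y|u))` keeps the exact marginals
`P_U` and `P_Y` (the perturbations sum to zero in `y` and average to zero under `P_U`), so
`I_ε = ∑ P_U u P_Y y φ(s)` with `s = ε J_Y(y|u) / P_Y y` and `φ(s) = (1 + s) log (1 + s)`.
Since `φ(s) = s + s²/2 + O(s³)`, the linear terms cancel because `∑_y J_Y(y|u) = 0`, and the
quadratic terms are exactly `(ε²/2) ∑_u P_U u ∑_y J_Y(y|u)² / P_Y y`.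
-/

/-- Mutual information of a joint PMF `p` on a finite product, with the convention
that a summand is `0` when `p (u, a) = 0`.  The marginals are computed from `p`. -/
noncomputable def mutInfo {α β : Type*} [Fintype α] [Fintype β] (p : α → β → ℝ) : ℝ :=
  ∑ a, ∑ b, if p a b = 0 then 0
    else p a b * Real.log (p a b / ((∑ b', p a b') * (∑ a', p a' b)))

lemma Real.isBigO_log_one_add_sub_taylor :
    (fun s : ℝ => Real.log (1 + s) - (s - s ^ 2 / 2)) =O[𝓝 0] fun s => s ^ 3 := by
  rw [isBigO_iff]
  refine ⟨2, ?_⟩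
  filter_upwards [eventually_abs_sub_lt 0 (by norm_num : (0 : ℝ) < 1 / 2)] with s hs
  rw [sub_zero] at hs
  have h_taylor := Real.abs_log_sub_add_sum_range_le (x := -s) (by rw [abs_neg]; linarith) 2
  norm_num [sum_range_succ] at h_taylor
  rw [Real.norm_eq_abs, Real.norm_eq_abs, abs_pow]
  calc |Real.log (1 + s) - (s - s ^ 2 / 2)| = |-s + s ^ 2 / 2 + Real.log (1 + s)| := by
        congr 1; ring
    _ ≤ |s| ^ 3 / (1 - |s|) := h_taylor
    _ ≤ 2 * |s| ^ 3 := by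
        rw [div_le_iff₀ (by linarith)]
        nlinarith [pow_nonneg (abs_nonneg s) 3]

noncomputable def oneAddMulLogRemainder (s : ℝ) : ℝ :=
  (1 + s) * Real.log (1 + s) - (s + s ^ 2 / 2)

lemma isBigO_oneAddMulLogRemainder : oneAddMulLogRemainder =O[𝓝 0] fun s => s ^ 3 := by
  have h_eq : oneAddMulLogRemainder =
      fun s => (1 + s) * (Real.log (1 + s) - (s - s ^ 2 / 2)) - 2⁻¹ * s ^ 3 := by
    funext s; unfold oneAddMulLogRemainder; ring
  have h_bdd : (fun s : ℝ => 1 + s) =O[𝓝 0] fun _ => (1 : ℝ) :=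
    (continuous_const.add continuous_id).continuousAt.isBigO_one ℝ
  rw [h_eq]
  refine IsBigO.sub ?_ (isBigO_const_mul_self _ _ _)
  simpa using h_bdd.mul Real.isBigO_log_one_add_sub_taylor

lemma isBigO_oneAddMulLogRemainder_mul (c : ℝ) :
    (fun ε => oneAddMulLogRemainder (ε * c)) =O[𝓝 0] fun ε => |ε| ^ 3 := by
  have h_lin : Tendsto (fun ε : ℝ => ε * c) (𝓝 0) (𝓝 0) := by
    simpa using (continuous_mul_const c).tendsto (0 : ℝ)
  refine (isBigO_oneAddMulLogRemainder.comp_tendsto h_lin).trans ?_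
  refine IsBigO.of_bound (|c| ^ 3) (Eventually.of_forall fun ε => ?_)
  simp [mul_pow, mul_comm]

section

variable {α β : Type*} [Fintype α] [Fintype β]

lemma mutInfo_eq_sum_mul_log_div (p : α → β → ℝ) :
    mutInfo p = ∑ a, ∑ b, p a b * Real.log (p a b / ((∑ b', p a b') * (∑ a', p a' b))) := by
  unfold mutInfo
  refine sum_congr rfl fun a _ => sum_congr rfl fun b _ => ?_
  split_ifs with h <;> simp [h]

lemma mutInfo_eq_sum_mul_one_add_mul_log {p : α → β → ℝ} {P : α → ℝ} {Q : β → ℝ}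
    {s : α → β → ℝ} (hp : ∀ a b, p a b = P a * Q b * (1 + s a b))
    (hrow : ∀ a, ∑ b, p a b = P a) (hcol : ∀ b, ∑ a, p a b = Q b) :
    mutInfo p = ∑ a, ∑ b, P a * Q b * ((1 + s a b) * Real.log (1 + s a b)) := by
  rw [mutInfo_eq_sum_mul_log_div]
  refine sum_congr rfl fun a _ => sum_congr rfl fun b _ => ?_
  rw [hrow, hcol, hp]
  rcases eq_or_ne (P a * Q b) 0 with h | h
  · simp [h]
  · rw [mul_div_cancel_left₀ _ h, mul_assoc]

lemma mutInfo_perturbation_sub_quadratic {P : α → ℝ} {Q : β → ℝ} {D : α → β → ℝ}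
    (hP : ∑ a, P a = 1) (hQ : ∑ b, Q b = 1) (hQ0 : ∀ b, Q b ≠ 0)
    (hDrow : ∀ a, ∑ b, D a b = 0) (hDcol : ∀ b, ∑ a, P a * D a b = 0) (ε : ℝ) :
    mutInfo (fun a b => P a * (Q b + ε * D a b)) - ε ^ 2 / 2 * ∑ a, P a * ∑ b, D a b ^ 2 / Q b
      = ∑ a, ∑ b, P a * Q b * oneAddMulLogRemainder (ε * (D a b / Q b)) := by
  have hrow : ∀ a, ∑ b, P a * (Q b + ε * D a b) = P a := fun a => by
    rw [← mul_sum, sum_add_distrib, ← mul_sum, hQ, hDrow, mul_zero, add_zero, mul_one]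
  have hcol : ∀ b, ∑ a, P a * (Q b + ε * D a b) = Q b := fun b => by
    simp_rw [mul_add, sum_add_distrib, ← sum_mul, hP, one_mul, mul_left_comm (P _),
      ← mul_sum, hDcol, mul_zero, add_zero]
  have hp : ∀ a b, P a * (Q b + ε * D a b) = P a * Q b * (1 + ε * (D a b / Q b)) :=
    fun a b => by field_simp [hQ0 b]
  have hterm : ∀ a b, P a * Q b * oneAddMulLogRemainder (ε * (D a b / Q b))
      = P a * Q b * ((1 + ε * (D a b / Q b)) * Real.log (1 + ε * (D a b / Q b)))
        - (ε * (P a * D a b) + ε ^ 2 / 2 * (P a * (D a b ^ 2 / Q b))) := fun a b => by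
    unfold oneAddMulLogRemainder
    field_simp [hQ0 b]
  rw [mutInfo_eq_sum_mul_one_add_mul_log hp hrow hcol]
  simp only [hterm, sum_sub_distrib, sum_add_distrib, ← mul_sum, hDrow, mul_zero,
    zero_add]

theorem isBigO_mutInfo_perturbation_sub_quadratic {P : α → ℝ} {Q : β → ℝ} {D : α → β → ℝ}
    (hP : ∑ a, P a = 1) (hQ : ∑ b, Q b = 1) (hQ0 : ∀ b, Q b ≠ 0)
    (hDrow : ∀ a, ∑ b, D a b = 0) (hDcol : ∀ b, ∑ a, P a * D a b = 0) :
    (fun ε : ℝ => mutInfo (fun a b => P a * (Q b + ε * D a b))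
        - ε ^ 2 / 2 * ∑ a, P a * ∑ b, D a b ^ 2 / Q b) =O[𝓝 0] fun ε => |ε| ^ 3 := by
  simp_rw [mutInfo_perturbation_sub_quadratic hP hQ hQ0 hDrow hDcol]
  refine IsBigO.fun_sum fun a _ => IsBigO.fun_sum fun b _ => ?_
  exact (isBigO_oneAddMulLogRemainder_mul _).const_mul_left _

end

lemma sum_sum_mul_of_sum_eq_one {ι κ : Type*} [Fintype ι] [Fintype κ] {W : κ → ι → ℝ}
    (hW : ∀ i, ∑ k, W k i = 1) (f : ι → ℝ) : ∑ k, ∑ i, f i * W k i = ∑ i, f i := by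
  rw [sum_comm]
  simp [← mul_sum, hW]

theorem output_mutual_information_local_quadratic_approx_general
    {𝒰 𝒳 𝒴 : Type*} [Fintype 𝒰] [Fintype 𝒳]
    [Fintype 𝒴]
    (PU : 𝒰 → ℝ) (hPU1 : ∑ u, PU u = 1)
    (PX : 𝒳 → ℝ) (hPX1 : ∑ x, PX x = 1)
    (W : 𝒴 → 𝒳 → ℝ)
    (hW1 : ∀ x, ∑ y, W y x = 1)
    (hPY : ∀ y, 0 < ∑ x, PX x * W y x)
    (J : 𝒳 → 𝒰 → ℝ)
    (hJsum : ∀ u, ∑ x, J x u = 0)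
    (hJcons : ∀ x, ∑ u, PU u * J x u = 0) :
    (fun ε : ℝ =>
        mutInfo (fun u y => PU u * ∑ x, (PX x + ε * J x u) * W y x)
          - ε ^ 2 / 2 *
              ∑ u, PU u * ∑ y, (∑ x, J x u * W y x) ^ 2 / (∑ x, PX x * W y x))
      =O[𝓝 0] (fun ε : ℝ => |ε| ^ 3) := by
  have h_output : ∀ (ε : ℝ) u y, ∑ x, (PX x + ε * J x u) * W y x
      = ∑ x, PX x * W y x + ε * ∑ x, J x u * W y x := fun ε u y => by
    simp only [add_mul, sum_add_distrib, mul_sum, mul_assoc]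
  have h_output_cons : ∀ y, ∑ u, PU u * ∑ x, J x u * W y x = 0 := fun y => by
    simp_rw [mul_sum, ← mul_assoc]
    rw [sum_comm]
    simp [← sum_mul, hJcons]
  simp_rw [h_output]
  exact isBigO_mutInfo_perturbation_sub_quadratic hPU1
    ((sum_sum_mul_of_sum_eq_one hW1 PX).trans hPX1) (fun y => (hPY y).ne')
    (fun u => (sum_sum_mul_of_sum_eq_one hW1 (J · u)).trans (hJsum u)) h_output_cons

/-- Passing zero-sum, consistent perturbations `J(·|u)` of a strictly
positive reference PMF `P_X` through a channel `W`, the mutual information of the joint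
PMF `q_ε(u,y) = P_U u * ∑ x (P_X x + ε·J(x|u)) W(y|x)` agrees with the quadratic form
`(ε²/2) ∑_u P_U u ∑_y (J_Y(y|u))²/(P_Y y)`, where `J_Y(y|u) = ∑ x J(x|u) W(y|x)` and
`P_Y y = ∑ x P_X x W(y|x)`, up to an `O(|ε|³)` error as `ε → 0`. -/
theorem output_mutual_information_local_quadratic_approx
    {𝒰 𝒳 𝒴 : Type*} [Fintype 𝒰] [Nonempty 𝒰] [Fintype 𝒳] [Nonempty 𝒳]
    [Fintype 𝒴] [Nonempty 𝒴]
    (PU : 𝒰 → ℝ) (hPU0 : ∀ u, 0 ≤ PU u) (hPU1 : ∑ u, PU u = 1)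
    (PX : 𝒳 → ℝ) (hPX0 : ∀ x, 0 < PX x) (hPX1 : ∑ x, PX x = 1)
    (W : 𝒴 → 𝒳 → ℝ)
    (hW0 : ∀ x y, 0 ≤ W y x) (hW1 : ∀ x, ∑ y, W y x = 1)
    (hPY : ∀ y, 0 < ∑ x, PX x * W y x)
    (J : 𝒳 → 𝒰 → ℝ)
    (hJsum : ∀ u, ∑ x, J x u = 0)
    (hJcons : ∀ x, ∑ u, PU u * J x u = 0) :
    (fun ε : ℝ =>
        mutInfo (fun u y => PU u * ∑ x, (PX x + ε * J x u) * W y x)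
          - ε ^ 2 / 2 *
              ∑ u, PU u * ∑ y, (∑ x, J x u * W y x) ^ 2 / (∑ x, PX x * W y x))
      =O[𝓝 0] (fun ε : ℝ => |ε| ^ 3) :=
  output_mutual_information_local_quadratic_approx_general PU hPU1 PX hPX1 W hW1 hPY J hJsum hJcons
end

section
/- (Lower bound of KL divergence by chi-squared divergence.) Let 𝒳 be a nonempty finite type and Q, P PMFs on 𝒳 with P x > 0 for every x, and let p_min = min over x of P x (so p_min > 0). Then D(Q‖P) ≥ (p_min / 2) · χ²(Q,P), i.e., ∑ x, Q x * Real.log (Q x / P x) ≥ (p_min / 2) * ∑ x, (Q x − P x)² / P x, where a summand of the left-hand side is taken to be 0 when Q x = 0. -/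
/-!
Pointwise, `q log (q/p) ≥ (q - p) + (q - p)² / 2` for `p, q ∈ [0, 1]`, `p > 0`: as a function of `q`
the gap vanishes at `q = p`, and its derivative `log (q/p) - (q - p)` has the sign of `q - p`
because `log x - x` increases on `(0, 1]`. Summing over `x`, the linear terms cancel because `Q` and `P` both have mass `1`, so
`D(Q‖P) ≥ ½ ∑ (Q x - P x)²`, and `(Q x - P x)² ≥ p_min (Q x - P x)² / P x` termwise.
-/

open Real Finset

theorem Real.sub_le_log_sub_log {a b : ℝ} (ha : 0 < a) (hab : a ≤ b) (hb : b ≤ 1) :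
    b - a ≤ log b - log a := by
  have hb0 : 0 < b := ha.trans_le hab
  have hlog := one_sub_inv_le_log_of_pos (div_pos hb0 ha)
  rw [log_div hb0.ne' ha.ne', inv_div, one_sub_div hb0.ne'] at hlog
  exact (le_div_self (sub_nonneg.2 hab) hb0 hb).trans hlog

noncomputable def klQuadraticGap (p q : ℝ) : ℝ :=
  q * (log q - log p) - (q - p) - (q - p) ^ 2 / 2

theorem hasDerivAt_klQuadraticGap (p : ℝ) {q : ℝ} (hq : 0 < q) :
    HasDerivAt (klQuadraticGap p) (log q - log p - (q - p)) q := by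
  have hmul : HasDerivAt (fun x => x * (log x - log p)) (1 * (log q - log p) + q * q⁻¹) q :=
    (hasDerivAt_id q).mul ((hasDerivAt_log hq.ne').sub_const (log p))
  have hsub : HasDerivAt (fun x => x - p) 1 q := (hasDerivAt_id q).sub_const p
  refine ((hmul.sub hsub).sub ((hsub.pow 2).div_const 2)).congr_deriv ?_
  rw [mul_inv_cancel₀ hq.ne']
  ring

theorem klQuadraticGap_nonneg {p q : ℝ} (hp : 0 < p) (hp1 : p ≤ 1) (hq : 0 < q) (hq1 : q ≤ 1) :
    0 ≤ klQuadraticGap p q := by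
  have hcont {D : Set ℝ} (hD : D ⊆ Set.Ioi 0) : ContinuousOn (klQuadraticGap p) D := fun x hx =>
    (hasDerivAt_klQuadraticGap p (hD hx)).continuousAt.continuousWithinAt
  have hderiv {D : Set ℝ} (hD : D ⊆ Set.Ioi 0) : ∀ x ∈ interior D,
      HasDerivWithinAt (klQuadraticGap p) (log x - log p - (x - p)) (interior D) x := fun x hx =>
    (hasDerivAt_klQuadraticGap p (hD (interior_subset hx))).hasDerivWithinAt
  have hzero : klQuadraticGap p p = 0 := by simp [klQuadraticGap]
  rcases le_total p q with hpq | hqp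
  · have hD : Set.Icc p 1 ⊆ Set.Ioi 0 := fun x hx => hp.trans_le hx.1
    have hmono : MonotoneOn (klQuadraticGap p) (Set.Icc p 1) := by
      refine monotoneOn_of_hasDerivWithinAt_nonneg (convex_Icc p 1) (hcont hD) (hderiv hD)
        fun x hx => ?_
      rw [interior_Icc] at hx
      linarith [sub_le_log_sub_log hp hx.1.le hx.2.le]
    simpa [hzero] using hmono ⟨le_rfl, hp1⟩ ⟨hpq, hq1⟩ hpq
  · have hD : Set.Ioc 0 p ⊆ Set.Ioi 0 := fun x hx => hx.1
    have hanti : AntitoneOn (klQuadraticGap p) (Set.Ioc 0 p) := by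
      refine antitoneOn_of_hasDerivWithinAt_nonpos (convex_Ioc 0 p) (hcont hD) (hderiv hD)
        fun x hx => ?_
      rw [interior_Ioc] at hx
      linarith [sub_le_log_sub_log hx.1 hx.2.le hp1]
    simpa [hzero] using hanti ⟨hq, hqp⟩ ⟨hp, le_rfl⟩ hqp

theorem sub_add_sq_div_two_le_mul_log_div {p q : ℝ} (hp : 0 < p) (hp1 : p ≤ 1) (hq : 0 ≤ q)
    (hq1 : q ≤ 1) : q - p + (q - p) ^ 2 / 2 ≤ q * log (q / p) := by
  rcases hq.eq_or_lt with rfl | hq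
  · nlinarith
  · have := klQuadraticGap_nonneg hp hp1 hq hq1
    rw [klQuadraticGap] at this
    rw [log_div hq.ne' hp.ne']
    linarith

theorem sum_sq_sub_div_two_le_sum_mul_log_div {ι : Type*} (s : Finset ι) (Q P : ι → ℝ)
    (hQ0 : ∀ x ∈ s, 0 ≤ Q x) (hQ1 : ∑ x ∈ s, Q x = 1)
    (hP0 : ∀ x ∈ s, 0 < P x) (hP1 : ∑ x ∈ s, P x = 1) :
    ∑ x ∈ s, (Q x - P x) ^ 2 / 2 ≤ ∑ x ∈ s, Q x * log (Q x / P x) := by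
  have hle_one {f : ι → ℝ} (hf0 : ∀ x ∈ s, 0 ≤ f x) (hf1 : ∑ x ∈ s, f x = 1) {x : ι}
      (hx : x ∈ s) : f x ≤ 1 :=
    hf1 ▸ single_le_sum hf0 hx
  have hlinear : ∑ x ∈ s, (Q x - P x) = 0 := by
    rw [sum_sub_distrib, hQ1, hP1, sub_self]
  calc ∑ x ∈ s, (Q x - P x) ^ 2 / 2
      = ∑ x ∈ s, (Q x - P x + (Q x - P x) ^ 2 / 2) := by rw [sum_add_distrib, hlinear, zero_add]
    _ ≤ ∑ x ∈ s, Q x * log (Q x / P x) := sum_le_sum fun x hx =>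
      sub_add_sq_div_two_le_mul_log_div (hP0 x hx)
        (hle_one (fun y hy => (hP0 y hy).le) hP1 hx) (hQ0 x hx) (hle_one hQ0 hQ1 hx)

theorem mul_sum_div_le_sum {ι : Type*} (s : Finset ι) (f P : ι → ℝ) {m : ℝ}
    (hf : ∀ x ∈ s, 0 ≤ f x) (hP : ∀ x ∈ s, 0 < P x) (hm : ∀ x ∈ s, m ≤ P x) :
    m * ∑ x ∈ s, f x / P x ≤ ∑ x ∈ s, f x := by
  rw [mul_sum]
  refine sum_le_sum fun x hx => ?_
  rw [mul_div_left_comm]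
  exact mul_le_of_le_one_right (hf x hx) ((div_le_one (hP x hx)).2 (hm x hx))

/-- Lower bound of KL divergence by chi-squared divergence.  For PMFs
`Q, P` on a nonempty finite type with `P` strictly positive and
`p_min = min_x P x > 0`, `D(Q‖P) ≥ (p_min/2) · χ²(Q,P)`, with the convention that a
KL summand is `0` when `Q x = 0`. -/
theorem chiSq_le_kl {𝒳 : Type*} [Fintype 𝒳] [Nonempty 𝒳]
    (Q P : 𝒳 → ℝ)
    (hQ0 : ∀ x, 0 ≤ Q x) (hQ1 : ∑ x, Q x = 1)
    (hP0 : ∀ x, 0 < P x) (hP1 : ∑ x, P x = 1) :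
    (Finset.univ.inf' Finset.univ_nonempty P) / 2 * ∑ x, (Q x - P x) ^ 2 / P x
      ≤ ∑ x, if Q x = 0 then 0 else Q x * Real.log (Q x / P x) := by
  have hchi : (univ.inf' univ_nonempty P) * ∑ x, (Q x - P x) ^ 2 / P x ≤ ∑ x, (Q x - P x) ^ 2 :=
    mul_sum_div_le_sum _ _ _ (fun x _ => sq_nonneg _) (fun x _ => hP0 x)
      (fun x hx => inf'_le P hx)
  have hkl := sum_sq_sub_div_two_le_sum_mul_log_div univ Q P (fun x _ => hQ0 x) hQ1
    (fun x _ => hP0 x) hP1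
  have hconvention : ∀ x, (if Q x = 0 then 0 else Q x * log (Q x / P x)) = Q x * log (Q x / P x) :=
    fun x => ite_eq_right_iff.2 fun h => by rw [h, zero_mul]
  rw [sum_congr rfl fun x _ => hconvention x]
  rw [← sum_div] at hkl
  linarith
end
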